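/- Define c(m,n,k,i,j) = Σ_{l=0}^{k} (-1)^l · C(i+j-k, i-l) · C(m-l, k-l) · C(n-k+l, l). If m and n are even, k ≤ min(m,n), and k is odd, then the central value vanishes: c(m, n, k, m/2, n/2) = 0. -/
import Mathlib

open Finset

/-- Integer binomial coefficient: `C(a,b) = 0` when `b < 0` or `b > a`. -/
def ch (a b : ℤ) : ℤ := if 0 ≤ b ∧ b ≤ a then ((a.toNat).choose b.toNat : ℤ) else 0

lemma ch_neg_left {a b : ℤ} (h : a < 0) : ch a b = 0 := by
  rw [ch, if_neg (by omega)]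

lemma ch_neg_right {a b : ℤ} (h : b < 0) : ch a b = 0 := by
  rw [ch, if_neg (by omega)]

lemma ch_of_lt {a b : ℤ} (h : a < b) : ch a b = 0 := by
  rw [ch, if_neg (by omega)]

lemma ch_coe (x y : ℕ) : ch (x:ℤ) (y:ℤ) = (x.choose y : ℤ) := by
  rcases le_or_gt y x with h | h
  · rw [ch, if_pos ⟨Int.natCast_nonneg y, by exact_mod_cast h⟩]
    simp
  · rw [ch_of_lt (by exact_mod_cast h), Nat.choose_eq_zero_of_lt h]
    simp

lemma ch_symm (a b : ℤ) : ch a b = ch a (a - b) := by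
  rcases lt_or_ge a 0 with ha | ha
  · rw [ch_neg_left ha, ch_neg_left ha]
  · obtain ⟨x, rfl⟩ : ∃ x:ℕ, a = (x:ℤ) := ⟨a.toNat, (Int.toNat_of_nonneg ha).symm⟩
    rcases lt_or_ge b 0 with hb | hb
    · rw [ch_neg_right hb, ch_of_lt (by omega : (x:ℤ) < (x:ℤ) - b)]
    · rcases lt_or_ge (x:ℤ) b with hab | hab
      · rw [ch_of_lt hab, ch_neg_right (by omega)]
      · obtain ⟨y, rfl⟩ : ∃ y:ℕ, b = (y:ℤ) := ⟨b.toNat, (Int.toNat_of_nonneg hb).symm⟩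
        have hyx : y ≤ x := by exact_mod_cast hab
        rw [(by push_cast [hyx]; try ring : (x:ℤ) - (y:ℤ) = ((x-y:ℕ):ℤ)), ch_coe, ch_coe]
        exact_mod_cast (Nat.choose_symm hyx).symm

lemma ch_abs1 (a b : ℤ) : b * ch a b = a * ch (a-1) (b-1) := by
  rcases lt_or_ge b 1 with hb | hb
  · rw [ch_neg_right (by omega : b - 1 < 0), mul_zero]
    rcases lt_or_ge b 0 with h0 | h0
    · rw [ch_neg_right h0, mul_zero]
    · have : b = 0 := by omega
      simp [this]
  · rcases lt_or_ge a b with hab | hab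
    · rw [ch_of_lt hab, ch_of_lt (by omega : a - 1 < b - 1), mul_zero, mul_zero]
    · obtain ⟨x, rfl⟩ : ∃ x:ℕ, a = (x:ℤ) := ⟨a.toNat, (Int.toNat_of_nonneg (by omega)).symm⟩
      obtain ⟨y, rfl⟩ : ∃ y:ℕ, b = (y:ℤ) := ⟨b.toNat, (Int.toNat_of_nonneg (by omega)).symm⟩
      obtain ⟨x', rfl⟩ : ∃ x':ℕ, x = x'+1 := ⟨x-1, by omega⟩
      obtain ⟨y', rfl⟩ : ∃ y':ℕ, y = y'+1 := ⟨y-1, by omega⟩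
      rw [(by push_cast; try ring : ((x'+1:ℕ):ℤ) - 1 = ((x':ℕ):ℤ)),
          (by push_cast; try ring : ((y'+1:ℕ):ℤ) - 1 = ((y':ℕ):ℤ)), ch_coe, ch_coe]
      have h := Nat.add_one_mul_choose_eq x' y'
      push_cast
      push_cast at h
      nlinarith [h]

lemma ch_abs2 (a b : ℤ) : (a - b) * ch a b = a * ch (a-1) b := by
  rw [ch_symm a b, ch_abs1 a (a-b), (by ring : a - b - 1 = (a-1) - b), ← ch_symm (a-1) b]

lemma ch_zero_right (a : ℤ) (ha : 0 ≤ a) : ch a 0 = 1 := by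
  obtain ⟨x, rfl⟩ : ∃ x:ℕ, a = (x:ℤ) := ⟨a.toNat, (Int.toNat_of_nonneg ha).symm⟩
  rw [(by push_cast : (0:ℤ) = ((0:ℕ):ℤ)), ch_coe]; simp

lemma ch_self (a : ℤ) (ha : 0 ≤ a) : ch a a = 1 := by
  obtain ⟨x, rfl⟩ : ∃ x:ℕ, a = (x:ℤ) := ⟨a.toNat, (Int.toNat_of_nonneg ha).symm⟩
  rw [ch_coe]; simp

lemma ch_pascal (a b : ℤ) (ha : 1 ≤ a) : ch a b = ch (a-1) (b-1) + ch (a-1) b := by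
  obtain ⟨x, rfl⟩ : ∃ x:ℕ, a = ((x:ℤ)+1) := ⟨(a-1).toNat, by omega⟩
  rcases lt_or_ge b 0 with hb | hb
  · rw [ch_neg_right hb, ch_neg_right (by omega : b - 1 < 0), ch_neg_right hb]; ring
  · obtain ⟨y, rfl⟩ : ∃ y:ℕ, b = (y:ℤ) := ⟨b.toNat, (Int.toNat_of_nonneg hb).symm⟩
    rcases Nat.eq_zero_or_pos y with rfl | hy
    · rw [(by push_cast; try ring : ((0:ℕ):ℤ) - 1 = (-1:ℤ)), ch_neg_right (by norm_num : (-1:ℤ) < 0)]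
      rw [(by push_cast; try ring : (x:ℤ)+1-1 = ((x:ℕ):ℤ))]
      rw [(by push_cast; try ring : ((0:ℕ):ℤ) = (0:ℤ))]
      rw [ch_zero_right _ (by positivity), ch_zero_right _ (by positivity)]
      ring
    · obtain ⟨y', rfl⟩ : ∃ y':ℕ, y = y'+1 := ⟨y-1, by omega⟩
      rw [(by push_cast; try ring : (x:ℤ)+1 = ((x+1:ℕ):ℤ))]
      rw [(by push_cast; try ring : (((x+1:ℕ)):ℤ) - 1 = ((x:ℕ):ℤ)),
          (by push_cast; try ring : ((y'+1:ℕ):ℤ) - 1 = ((y':ℕ):ℤ))]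
      rw [ch_coe, ch_coe, ch_coe]
      exact_mod_cast congrArg (Nat.cast : ℕ → ℤ) (Nat.choose_succ_succ x y')

/-- Clebsch-Gordan sum `c_{m,n,k}(i,j)`. -/
def cg (m n k i j : ℕ) : ℤ :=
  ∑ l ∈ Finset.range (k+1),
    (-1:ℤ)^l * ch ((i:ℤ)+(j:ℤ)-(k:ℤ)) ((i:ℤ)-(l:ℤ))
      * ch ((m:ℤ)-(l:ℤ)) ((k:ℤ)-(l:ℤ)) * ch ((n:ℤ)-(k:ℤ)+(l:ℤ)) (l:ℤ)

def Fs (m n k i j : ℕ) : ℤ :=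
  ∑ r ∈ Finset.range (k+1),
    (-1:ℤ)^r * (k.choose r : ℤ) * ch ((m:ℤ)-(k:ℤ)) ((i:ℤ)-(r:ℤ))
      * ch ((n:ℤ)-(k:ℤ)) ((j:ℤ)-(k:ℤ)+(r:ℤ))

lemma cg_zero_of_lt {m n k i j : ℕ} (h : i + j < k) : cg m n k i j = 0 := by
  refine Finset.sum_eq_zero fun l _ => ?_
  rw [ch_neg_left (by push_cast; omega : (i:ℤ)+(j:ℤ)-(k:ℤ) < 0)]
  ring

lemma Fs_zero_of_lt {m n k i j : ℕ} (h : i + j < k) : Fs m n k i j = 0 := by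
  refine Finset.sum_eq_zero fun r hr => ?_
  have hr' : r ≤ k := by simpa [Nat.lt_succ_iff] using Finset.mem_range.mp hr
  rcases lt_or_ge ((i:ℤ) - r) 0 with hc | hc
  · rw [ch_neg_right hc]; ring
  · rw [ch_neg_right (by push_cast; omega : (j:ℤ)-(k:ℤ)+(r:ℤ) < 0)]; ring

lemma Fs_zero_of_gt {m n k i j : ℕ} (h : m < i) : Fs m n k i j = 0 := by
  refine Finset.sum_eq_zero fun r hr => ?_
  have hr' : r ≤ k := by simpa [Nat.lt_succ_iff] using Finset.mem_range.mp hr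
  rw [ch_of_lt (by push_cast; omega : (m:ℤ)-(k:ℤ) < (i:ℤ)-(r:ℤ))]
  ring

lemma cg_Rm (m n k i j : ℕ) (hm : 1 ≤ m) (hi : 1 ≤ i) :
    ((m:ℤ)-(k:ℤ)) * cg m n k i j
      = ((i:ℤ)+(j:ℤ)-(k:ℤ)) * cg (m-1) n k (i-1) j + ((m:ℤ)-(i:ℤ)) * cg (m-1) n k i j := by
  unfold cg
  rw [Finset.mul_sum, Finset.mul_sum, Finset.mul_sum, ← Finset.sum_add_distrib]
  refine Finset.sum_congr rfl fun l _ => ?_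
  have cm : ((m-1:ℕ):ℤ) = (m:ℤ)-1 := by push_cast [hm]; ring
  have ci : ((i-1:ℕ):ℤ) = (i:ℤ)-1 := by push_cast [hi]; ring
  rw [cm, ci]
  have e1 := ch_abs2 ((m:ℤ)-(l:ℤ)) ((k:ℤ)-(l:ℤ))
  have e2 := ch_abs1 ((i:ℤ)+(j:ℤ)-(k:ℤ)) ((i:ℤ)-(l:ℤ))
  have a1 : ((m:ℤ)-(l:ℤ)) - ((k:ℤ)-(l:ℤ)) = (m:ℤ)-(k:ℤ) := by ring
  have a2 : ((m:ℤ)-(l:ℤ)) - 1 = ((m:ℤ)-1) - (l:ℤ) := by ring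
  have a3 : ((i:ℤ)+(j:ℤ)-(k:ℤ)) - 1 = ((i:ℤ)-1) + (j:ℤ) - (k:ℤ) := by ring
  have a4 : ((i:ℤ)-(l:ℤ)) - 1 = ((i:ℤ)-1) - (l:ℤ) := by ring
  rw [a1, a2] at e1
  rw [a3, a4] at e2
  linear_combination ((-1:ℤ)^l * ch ((i:ℤ)+(j:ℤ)-(k:ℤ)) ((i:ℤ)-(l:ℤ))
      * ch ((n:ℤ)-(k:ℤ)+(l:ℤ)) (l:ℤ)) * e1
    + ((-1:ℤ)^l * ch (((m:ℤ)-1)-(l:ℤ)) ((k:ℤ)-(l:ℤ)) * ch ((n:ℤ)-(k:ℤ)+(l:ℤ)) (l:ℤ)) * e2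

lemma cg_Rn (m n k i j : ℕ) (hn : 1 ≤ n) (hj : 1 ≤ j) :
    ((n:ℤ)-(k:ℤ)) * cg m n k i j
      = ((i:ℤ)+(j:ℤ)-(k:ℤ)) * cg m (n-1) k i (j-1) + ((n:ℤ)-(j:ℤ)) * cg m (n-1) k i j := by
  unfold cg
  rw [Finset.mul_sum, Finset.mul_sum, Finset.mul_sum, ← Finset.sum_add_distrib]
  refine Finset.sum_congr rfl fun l _ => ?_
  have cn : ((n-1:ℕ):ℤ) = (n:ℤ)-1 := by push_cast [hn]; ring
  have cj : ((j-1:ℕ):ℤ) = (j:ℤ)-1 := by push_cast [hj]; ring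
  rw [cn, cj]
  have e1 := ch_abs2 ((n:ℤ)-(k:ℤ)+(l:ℤ)) (l:ℤ)
  have e2 := ch_abs2 ((i:ℤ)+(j:ℤ)-(k:ℤ)) ((i:ℤ)-(l:ℤ))
  have a1 : ((n:ℤ)-(k:ℤ)+(l:ℤ)) - (l:ℤ) = (n:ℤ)-(k:ℤ) := by ring
  have a2 : ((n:ℤ)-(k:ℤ)+(l:ℤ)) - 1 = ((n:ℤ)-1) - (k:ℤ) + (l:ℤ) := by ring
  have a3 : ((i:ℤ)+(j:ℤ)-(k:ℤ)) - ((i:ℤ)-(l:ℤ)) = (j:ℤ)-(k:ℤ)+(l:ℤ) := by ring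
  have a4 : ((i:ℤ)+(j:ℤ)-(k:ℤ)) - 1 = (i:ℤ) + ((j:ℤ)-1) - (k:ℤ) := by ring
  rw [a1, a2] at e1
  rw [a3, a4] at e2
  linear_combination ((-1:ℤ)^l * ch ((i:ℤ)+(j:ℤ)-(k:ℤ)) ((i:ℤ)-(l:ℤ))
      * ch ((m:ℤ)-(l:ℤ)) ((k:ℤ)-(l:ℤ))) * e1
    + ((-1:ℤ)^l * ch ((m:ℤ)-(l:ℤ)) ((k:ℤ)-(l:ℤ)) * ch (((n:ℤ)-1)-(k:ℤ)+(l:ℤ)) (l:ℤ)) * e2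

lemma Fs_pascal_m (m n k i j : ℕ) (hm : k+1 ≤ m) (hi : 1 ≤ i) :
    Fs m n k i j = Fs (m-1) n k (i-1) j + Fs (m-1) n k i j := by
  unfold Fs
  rw [← Finset.sum_add_distrib]
  refine Finset.sum_congr rfl fun r _ => ?_
  have cm : ((m-1:ℕ):ℤ) = (m:ℤ)-1 := by push_cast [le_trans (Nat.le_add_left 1 k) hm]; ring
  have ci : ((i-1:ℕ):ℤ) = (i:ℤ)-1 := by push_cast [hi]; ring
  rw [cm, ci]
  have e := ch_pascal ((m:ℤ)-(k:ℤ)) ((i:ℤ)-(r:ℤ)) (by push_cast; omega)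
  have a1 : ((m:ℤ)-(k:ℤ)) - 1 = ((m:ℤ)-1) - (k:ℤ) := by ring
  have a2 : ((i:ℤ)-(r:ℤ)) - 1 = ((i:ℤ)-1) - (r:ℤ) := by ring
  rw [a1, a2] at e
  linear_combination ((-1:ℤ)^r * (k.choose r : ℤ)
      * ch ((n:ℤ)-(k:ℤ)) ((j:ℤ)-(k:ℤ)+(r:ℤ))) * e

lemma Fs_pascal_n (m n k i j : ℕ) (hn : k+1 ≤ n) (hj : 1 ≤ j) :
    Fs m n k i j = Fs m (n-1) k i (j-1) + Fs m (n-1) k i j := by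
  unfold Fs
  rw [← Finset.sum_add_distrib]
  refine Finset.sum_congr rfl fun r _ => ?_
  have cn : ((n-1:ℕ):ℤ) = (n:ℤ)-1 := by push_cast [le_trans (Nat.le_add_left 1 k) hn]; ring
  have cj : ((j-1:ℕ):ℤ) = (j:ℤ)-1 := by push_cast [hj]; ring
  rw [cn, cj]
  have e := ch_pascal ((n:ℤ)-(k:ℤ)) ((j:ℤ)-(k:ℤ)+(r:ℤ)) (by push_cast; omega)
  have a1 : ((n:ℤ)-(k:ℤ)) - 1 = ((n:ℤ)-1) - (k:ℤ) := by ring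
  have a2 : ((j:ℤ)-(k:ℤ)+(r:ℤ)) - 1 = ((j:ℤ)-1) - (k:ℤ) + (r:ℤ) := by ring
  rw [a1, a2] at e
  linear_combination ((-1:ℤ)^r * (k.choose r : ℤ)
      * ch ((m:ℤ)-(k:ℤ)) ((i:ℤ)-(r:ℤ))) * e

lemma cg_i0 {m n k j : ℕ} (hj : k ≤ j) (hm : k ≤ m) (hn : k ≤ n) :
    cg m n k 0 j = ch (m:ℤ) (k:ℤ) := by
  unfold cg
  rw [Finset.sum_eq_single_of_mem 0 (Finset.mem_range.mpr (by omega))]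
  · push_cast
    simp only [zero_add, sub_zero, add_zero]
    rw [ch_zero_right ((j:ℤ)-(k:ℤ)) (by omega), ch_zero_right ((n:ℤ)-(k:ℤ)) (by omega)]
    ring
  · intro l _ hl
    rw [ch_neg_right (by push_cast; omega : ((0:ℕ):ℤ)-(l:ℤ) < 0)]
    ring

lemma Fs_i0 {m n k j : ℕ} (hm : k ≤ m) :
    Fs m n k 0 j = ch ((n:ℤ)-(k:ℤ)) ((j:ℤ)-(k:ℤ)) := by
  unfold Fs
  rw [Finset.sum_eq_single_of_mem 0 (Finset.mem_range.mpr (by omega))]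
  · push_cast
    simp only [zero_add, sub_zero, add_zero, pow_zero, Nat.choose_zero_right, Nat.cast_one,
      one_mul]
    rw [ch_zero_right ((m:ℤ)-(k:ℤ)) (by omega)]
    ring
  · intro r _ hr
    rw [ch_neg_right (by push_cast; omega : ((0:ℕ):ℤ)-(r:ℤ) < 0)]
    ring

lemma cg_j0 {m n k i : ℕ} (hi : k ≤ i) (hm : k ≤ m) (hn : k ≤ n) :
    cg m n k i 0 = (-1:ℤ)^k * ch (n:ℤ) (k:ℤ) := by
  unfold cg
  rw [Finset.sum_eq_single_of_mem k (Finset.mem_range.mpr (by omega))]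
  · push_cast
    rw [(by ring : (i:ℤ)+(0:ℤ)-(k:ℤ) = (i:ℤ)-(k:ℤ)), ch_self ((i:ℤ)-(k:ℤ)) (by omega)]
    rw [(by ring : (k:ℤ)-(k:ℤ) = (0:ℤ)), ch_zero_right ((m:ℤ)-(k:ℤ)) (by omega)]
    rw [(by ring : (n:ℤ)-(k:ℤ)+(k:ℤ) = (n:ℤ))]
    ring
  · intro l hl hlk
    have : l < k := by simp [Nat.lt_succ_iff] at hl; omega
    rw [ch_of_lt (by push_cast; omega : (i:ℤ)+((0:ℕ):ℤ)-(k:ℤ) < (i:ℤ)-(l:ℤ))]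
    ring

lemma Fs_j0 {m n k i : ℕ} (hn : k ≤ n) :
    Fs m n k i 0 = (-1:ℤ)^k * ch ((m:ℤ)-(k:ℤ)) ((i:ℤ)-(k:ℤ)) := by
  unfold Fs
  rw [Finset.sum_eq_single_of_mem k (Finset.mem_range.mpr (by omega))]
  · push_cast
    rw [(by ring : (0:ℤ)-(k:ℤ)+(k:ℤ) = (0:ℤ)), ch_zero_right ((n:ℤ)-(k:ℤ)) (by omega),
      Nat.choose_self]
    push_cast
    ring
  · intro r hr hrk
    have : r < k := by simp [Nat.lt_succ_iff] at hr; omega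
    rw [ch_neg_right (by push_cast; omega : ((0:ℕ):ℤ)-(k:ℤ)+(r:ℤ) < 0)]
    ring

lemma cg_base_eq {k i j : ℕ} (hij : i + j = k) :
    cg k k k i j = (-1:ℤ)^i := by
  have hik : i ≤ k := by omega
  unfold cg
  rw [Finset.sum_eq_single_of_mem i (Finset.mem_range.mpr (by omega))]
  · rw [(by push_cast; omega : (i:ℤ)+(j:ℤ)-(k:ℤ) = (0:ℤ)),
      (by ring : (i:ℤ)-(i:ℤ) = (0:ℤ)), ch_zero_right 0 le_rfl,
      ch_self ((k:ℤ)-(i:ℤ)) (by omega),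
      (by ring : (k:ℤ)-(k:ℤ)+(i:ℤ) = (i:ℤ)), ch_self (i:ℤ) (by positivity)]
    ring
  · intro l _ hl
    rw [(by push_cast; omega : (i:ℤ)+(j:ℤ)-(k:ℤ) = (0:ℤ))]
    rcases lt_or_ge l i with h | h
    · rw [ch_of_lt (by push_cast; omega : (0:ℤ) < (i:ℤ)-(l:ℤ))]; ring
    · rw [ch_neg_right (by push_cast; omega : (i:ℤ)-(l:ℤ) < 0)]; ring

lemma Fs_base_eq {k i j : ℕ} (hij : i + j = k) :
    Fs k k k i j = (-1:ℤ)^i * (k.choose i : ℤ) := by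
  unfold Fs
  rw [Finset.sum_eq_single_of_mem i (Finset.mem_range.mpr (by omega))]
  · rw [(by push_cast; omega : (k:ℤ)-(k:ℤ) = (0:ℤ)),
      (by ring : (i:ℤ)-(i:ℤ) = (0:ℤ)), ch_zero_right 0 le_rfl,
      (by push_cast; omega : (j:ℤ)-(k:ℤ)+(i:ℤ) = (0:ℤ)), ch_zero_right 0 le_rfl]
    ring
  · intro r _ hr
    rw [(by push_cast; omega : (k:ℤ)-(k:ℤ) = (0:ℤ))]
    rcases lt_or_ge r i with h | h
    · rw [ch_of_lt (by push_cast; omega : (0:ℤ) < (i:ℤ)-(r:ℤ)), mul_zero, zero_mul]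
    · rw [ch_neg_right (by push_cast; omega : (i:ℤ)-(r:ℤ) < 0), mul_zero, zero_mul]

lemma cg_base_gt {k i j : ℕ} (hij : k < i + j) (hik : i ≤ k) (hjk : j ≤ k) :
    cg k k k i j = 0 := by
  unfold cg
  have hstep : ∀ l ∈ Finset.range (k+1),
      (-1:ℤ)^l * ch ((i:ℤ)+(j:ℤ)-(k:ℤ)) ((i:ℤ)-(l:ℤ))
        * ch ((k:ℤ)-(l:ℤ)) ((k:ℤ)-(l:ℤ)) * ch ((k:ℤ)-(k:ℤ)+(l:ℤ)) (l:ℤ)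
      = ((-1:ℤ)^l * ch ((i:ℤ)+(j:ℤ)-(k:ℤ)-1) ((i:ℤ)-(l:ℤ)))
        - ((-1:ℤ)^(l+1) * ch ((i:ℤ)+(j:ℤ)-(k:ℤ)-1) ((i:ℤ)-((l:ℤ)+1))) := by
    intro l hl
    have hlk : l ≤ k := by simp [Nat.lt_succ_iff] at hl; omega
    rw [ch_self ((k:ℤ)-(l:ℤ)) (by omega),
      (by ring : (k:ℤ)-(k:ℤ)+(l:ℤ) = (l:ℤ)), ch_self (l:ℤ) (by positivity)]
    rw [ch_pascal ((i:ℤ)+(j:ℤ)-(k:ℤ)) ((i:ℤ)-(l:ℤ)) (by omega)]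
    rw [(by ring : (i:ℤ)-(l:ℤ)-1 = (i:ℤ)-((l:ℤ)+1))]
    ring
  rw [Finset.sum_congr rfl hstep]
  have := Finset.sum_range_sub' (fun l => (-1:ℤ)^l * ch ((i:ℤ)+(j:ℤ)-(k:ℤ)-1) ((i:ℤ)-(l:ℤ))) (k+1)
  push_cast at this ⊢
  rw [this]
  rw [ch_of_lt (by omega : (i:ℤ)+(j:ℤ)-(k:ℤ)-1 < (i:ℤ)-(0:ℤ))]
  rw [ch_neg_right (by push_cast; omega : (i:ℤ)-((k:ℕ)+1:ℤ) < 0)]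
  ring

lemma Fs_base_gt {k i j : ℕ} (hij : k < i + j) :
    Fs k k k i j = 0 := by
  refine Finset.sum_eq_zero fun r hr => ?_
  rw [(by push_cast; omega : (k:ℤ)-(k:ℤ) = (0:ℤ))]
  rcases lt_trichotomy r i with h | rfl | h
  · rw [ch_of_lt (by push_cast; omega : (0:ℤ) < (i:ℤ)-(r:ℤ)), mul_zero, zero_mul]
  · rw [ch_of_lt (by push_cast; omega : (0:ℤ) < (j:ℤ)-(k:ℤ)+(r:ℤ))]
    ring
  · rw [ch_neg_right (by push_cast; omega : (i:ℤ)-(r:ℤ) < 0), mul_zero, zero_mul]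

lemma Fs_zero_of_gt' {m n k i j : ℕ} (h : n < j) : Fs m n k i j = 0 := by
  refine Finset.sum_eq_zero fun r hr => ?_
  rw [ch_of_lt (by push_cast; omega : (n:ℤ)-(k:ℤ) < (j:ℤ)-(k:ℤ)+(r:ℤ))]
  ring

lemma main_I (p : ℕ) : ∀ q k i j : ℕ, i ≤ k+p → j ≤ k+q →
    ((k.factorial * p.factorial * q.factorial : ℕ) : ℤ) * cg (k+p) (k+q) k i j
    = (((k+p-i).factorial * (k+q-j).factorial * (i+j-k).factorial : ℕ) : ℤ)
        * Fs (k+p) (k+q) k i j := by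
  induction p with
  | zero =>
    intro q
    induction q with
    | zero =>
      intro k i j hi hj
      simp only [Nat.add_zero] at hi hj ⊢
      rcases lt_trichotomy (i+j) k with h | h | h
      · rw [cg_zero_of_lt h, Fs_zero_of_lt h, mul_zero, mul_zero]
      · rw [cg_base_eq h, Fs_base_eq h]
        have e2 : k - j = i := by omega
        have e3 : i + j - k = 0 := by omega
        rw [e2, e3]
        have hh' : ((k.choose i : ℕ) : ℤ) * (i.factorial : ℤ) * ((k-i).factorial : ℤ)
            = (k.factorial : ℤ) := by
          exact_mod_cast Nat.choose_mul_factorial_mul_factorial (show i ≤ k by omega)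
        push_cast [Nat.factorial_zero]
        rw [← hh']
        ring
      · rw [cg_base_gt h hi hj, Fs_base_gt h, mul_zero, mul_zero]
    | succ q ihq =>
      intro k i j hi hj
      simp only [Nat.add_zero] at hi ⊢
      rcases lt_or_ge (i+j) k with hlt | hge
      · rw [cg_zero_of_lt hlt, Fs_zero_of_lt hlt, mul_zero, mul_zero]
      rcases Nat.eq_zero_or_pos j with rfl | hj1
      · -- j = 0, hence i = k
        have hik2 : i = k := by omega
        rw [cg_j0 (by omega) (le_refl k) (by omega), Fs_j0 (by omega)]
        rw [(by omega : (k:ℤ)-(k:ℤ) = (0:ℤ)), (by omega : (i:ℤ)-(k:ℤ) = (0:ℤ)),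
          ch_zero_right 0 le_rfl, ch_coe]
        have e4 : k - i = 0 := by omega
        have e5 : i + 0 - k = 0 := by omega
        have e6 : k + (q+1) - 0 = k + (q+1) := by omega
        rw [e4, e5, e6]
        have hc' : (((k+(q+1)).choose k : ℕ):ℤ) * (k.factorial : ℤ) * ((q+1).factorial : ℤ)
            = ((k+(q+1)).factorial : ℤ) := by
          have := Nat.choose_mul_factorial_mul_factorial (show k ≤ k+(q+1) by omega)
          rw [Nat.add_sub_cancel_left] at this
          exact_mod_cast this
        push_cast [Nat.factorial_zero]
        push_cast at hc'
        linear_combination (-1:ℤ)^k * hc'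
      · -- j ≥ 1
        have hR := cg_Rn (k+0) (k+(q+1)) k i j (by omega) hj1
        have en : k+(q+1)-1 = k+q := by omega
        rw [en] at hR
        simp only [Nat.add_zero] at hR
        have hA : ((k.factorial : ℤ) * (q.factorial : ℤ))
              * (((i:ℤ)+(j:ℤ)-(k:ℤ)) * cg k (k+q) k i (j-1))
            = (((k-i).factorial : ℤ) * ((k+(q+1)-j).factorial : ℤ) * ((i+j-k).factorial : ℤ))
              * Fs k (k+q) k i (j-1) := by
          rcases eq_or_lt_of_le hge with heq | hgt
          · rw [Fs_zero_of_lt (by omega), mul_zero,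
              (by omega : (i:ℤ)+(j:ℤ)-(k:ℤ) = 0)]
            ring
          · have ih := ihq k i (j-1) hi (by omega)
            simp only [Nat.add_zero] at ih
            have e1 : k+q-(j-1) = k+(q+1)-j := by omega
            have e2 : i+(j-1)-k = i+j-k-1 := by omega
            rw [e1, e2] at ih
            have e3 : ((i+j-k).factorial : ℤ)
                = ((i:ℤ)+(j:ℤ)-(k:ℤ)) * ((i+j-k-1).factorial : ℤ) := by
              have h4 : i+j-k = (i+j-k-1)+1 := by omega
              rw [h4, Nat.factorial_succ]
              have h5 : ((i + j - k - 1 : ℕ) : ℤ) + 1 = (i:ℤ)+(j:ℤ)-(k:ℤ) := by omega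
              push_cast
              rw [h5]
            rw [e3]
            push_cast [Nat.factorial_zero] at ih
            linear_combination ((i:ℤ)+(j:ℤ)-(k:ℤ)) * ih
        have hB : ((k.factorial : ℤ) * (q.factorial : ℤ))
              * ((((k:ℤ)+(q:ℤ)+1)-(j:ℤ)) * cg k (k+q) k i j)
            = (((k-i).factorial : ℤ) * ((k+(q+1)-j).factorial : ℤ) * ((i+j-k).factorial : ℤ))
              * Fs k (k+q) k i j := by
          rcases lt_or_ge (k+q) j with hgt | hle
          · rw [Fs_zero_of_gt' (by omega), mul_zero,
              (by omega : ((k:ℤ)+(q:ℤ)+1)-(j:ℤ) = 0)]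
            ring
          · have ih := ihq k i j hi hle
            simp only [Nat.add_zero] at ih
            have e4 : ((k+(q+1)-j).factorial : ℤ)
                = (((k:ℤ)+(q:ℤ)+1)-(j:ℤ)) * ((k+q-j).factorial : ℤ) := by
              have h4 : k+(q+1)-j = (k+q-j)+1 := by omega
              rw [h4, Nat.factorial_succ]
              have h5 : ((k+q-j : ℕ) : ℤ) + 1 = ((k:ℤ)+(q:ℤ)+1)-(j:ℤ) := by omega
              push_cast
              rw [h5]
            rw [e4]
            push_cast [Nat.factorial_zero] at ih
            linear_combination (((k:ℤ)+(q:ℤ)+1)-(j:ℤ)) * ih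
        have hP := Fs_pascal_n k (k+(q+1)) k i j (by omega) hj1
        rw [en] at hP
        push_cast [Nat.factorial_succ, Nat.factorial_zero] at hR hA hB ⊢
        linear_combination ((k.factorial : ℤ) * (q.factorial : ℤ)) * hR + hA + hB
          - (((k-i).factorial : ℤ) * ((k+(q+1)-j).factorial : ℤ) * ((i+j-k).factorial : ℤ)) * hP
  | succ p ihp =>
    intro q k i j hi hj
    rcases lt_or_ge (i+j) k with hlt | hge
    · rw [cg_zero_of_lt hlt, Fs_zero_of_lt hlt, mul_zero, mul_zero]
    rcases Nat.eq_zero_or_pos i with rfl | hi1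
    · -- i = 0, hence k ≤ j
      rw [cg_i0 (by omega) (by omega) (by omega), Fs_i0 (by omega)]
      rw [(by omega : ((k+q:ℕ):ℤ)-(k:ℤ) = ((q:ℕ):ℤ)),
        (by push_cast [show k ≤ j by omega]; try ring : (j:ℤ)-(k:ℤ) = ((j-k:ℕ):ℤ)),
        ch_coe, ch_coe]
      have e1 : k+(p+1)-0 = k+(p+1) := by omega
      have e2 : 0+j-k = j-k := by omega
      have e3 : k+q-j = q-(j-k) := by omega
      rw [e1, e2, e3]
      have hc1 : (((k+(p+1)).choose k : ℕ) : ℤ) * (k.factorial : ℤ) * ((p+1).factorial : ℤ)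
          = ((k+(p+1)).factorial : ℤ) := by
        have := Nat.choose_mul_factorial_mul_factorial (show k ≤ k+(p+1) by omega)
        rw [Nat.add_sub_cancel_left] at this
        exact_mod_cast this
      have hc2 : ((q.choose (j-k) : ℕ) : ℤ) * ((j-k).factorial : ℤ) * ((q-(j-k)).factorial : ℤ)
          = (q.factorial : ℤ) := by
        exact_mod_cast Nat.choose_mul_factorial_mul_factorial (show j-k ≤ q by omega)
      push_cast [Nat.factorial_zero] at hc1 hc2 ⊢
      linear_combination ((q.factorial : ℤ)) * hc1
        - (((k+(p+1)).factorial : ℤ)) * hc2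
    · -- i ≥ 1
      have hR := cg_Rm (k+(p+1)) (k+q) k i j (by omega) hi1
      have em : k+(p+1)-1 = k+p := by omega
      rw [em] at hR
      have hA : ((k.factorial : ℤ) * (p.factorial : ℤ) * (q.factorial : ℤ))
            * (((i:ℤ)+(j:ℤ)-(k:ℤ)) * cg (k+p) (k+q) k (i-1) j)
          = (((k+(p+1)-i).factorial : ℤ) * ((k+q-j).factorial : ℤ) * ((i+j-k).factorial : ℤ))
            * Fs (k+p) (k+q) k (i-1) j := by
        rcases eq_or_lt_of_le hge with heq | hgt
        · rw [Fs_zero_of_lt (by omega), mul_zero,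
            (by omega : (i:ℤ)+(j:ℤ)-(k:ℤ) = 0)]
          ring
        · have ih := ihp q k (i-1) j (by omega) hj
          have e1 : k+p-(i-1) = k+(p+1)-i := by omega
          have e2 : (i-1)+j-k = i+j-k-1 := by omega
          rw [e1, e2] at ih
          have e3 : ((i+j-k).factorial : ℤ)
              = ((i:ℤ)+(j:ℤ)-(k:ℤ)) * ((i+j-k-1).factorial : ℤ) := by
            have h4 : i+j-k = (i+j-k-1)+1 := by omega
            rw [h4, Nat.factorial_succ]
            have h5 : ((i + j - k - 1 : ℕ) : ℤ) + 1 = (i:ℤ)+(j:ℤ)-(k:ℤ) := by omega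
            push_cast
            rw [h5]
          rw [e3]
          push_cast at ih
          linear_combination ((i:ℤ)+(j:ℤ)-(k:ℤ)) * ih
      have hB : ((k.factorial : ℤ) * (p.factorial : ℤ) * (q.factorial : ℤ))
            * ((((k:ℤ)+(p:ℤ)+1)-(i:ℤ)) * cg (k+p) (k+q) k i j)
          = (((k+(p+1)-i).factorial : ℤ) * ((k+q-j).factorial : ℤ) * ((i+j-k).factorial : ℤ))
            * Fs (k+p) (k+q) k i j := by
        rcases lt_or_ge (k+p) i with hgt | hle
        · rw [Fs_zero_of_gt (by omega), mul_zero,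
            (by omega : ((k:ℤ)+(p:ℤ)+1)-(i:ℤ) = 0)]
          ring
        · have ih := ihp q k i j hle hj
          have e4 : ((k+(p+1)-i).factorial : ℤ)
              = (((k:ℤ)+(p:ℤ)+1)-(i:ℤ)) * ((k+p-i).factorial : ℤ) := by
            have h4 : k+(p+1)-i = (k+p-i)+1 := by omega
            rw [h4, Nat.factorial_succ]
            have h5 : ((k+p-i : ℕ) : ℤ) + 1 = ((k:ℤ)+(p:ℤ)+1)-(i:ℤ) := by omega
            push_cast
            rw [h5]
          rw [e4]
          push_cast at ih
          linear_combination (((k:ℤ)+(p:ℤ)+1)-(i:ℤ)) * ih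
      have hP := Fs_pascal_m (k+(p+1)) (k+q) k i j (by omega) hi1
      rw [em] at hP
      push_cast [Nat.factorial_succ] at hR hA hB ⊢
      linear_combination ((k.factorial : ℤ) * (p.factorial : ℤ) * (q.factorial : ℤ)) * hR + hA + hB
        - (((k+(p+1)-i).factorial : ℤ) * ((k+q-j).factorial : ℤ) * ((i+j-k).factorial : ℤ)) * hP

lemma Fs_center_zero (a b k : ℕ) (hk : Odd k) :
    Fs (a+a) (b+b) k a b = 0 := by
  unfold Fs
  have hrefl := Finset.sum_range_reflect
    (fun r => (-1:ℤ)^r * ((k.choose r):ℤ) * ch (((a+a:ℕ):ℤ)-(k:ℤ)) ((a:ℤ)-(r:ℤ))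
      * ch (((b+b:ℕ):ℤ)-(k:ℤ)) ((b:ℤ)-(k:ℤ)+(r:ℤ))) (k+1)
  simp only [Nat.add_sub_cancel] at hrefl
  have key : ∀ r ∈ Finset.range (k+1),
      (-1:ℤ)^(k-r) * ((k.choose (k-r)):ℤ) * ch (((a+a:ℕ):ℤ)-(k:ℤ)) ((a:ℤ)-((k-r:ℕ):ℤ))
        * ch (((b+b:ℕ):ℤ)-(k:ℤ)) ((b:ℤ)-(k:ℤ)+((k-r:ℕ):ℤ))
      = -((-1:ℤ)^r * ((k.choose r):ℤ) * ch (((a+a:ℕ):ℤ)-(k:ℤ)) ((a:ℤ)-(r:ℤ))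
        * ch (((b+b:ℕ):ℤ)-(k:ℤ)) ((b:ℤ)-(k:ℤ)+(r:ℤ))) := by
    intro r hr
    have hrk : r ≤ k := by simp [Nat.lt_succ_iff] at hr; omega
    have hsgn : (-1:ℤ)^(k-r) * (-1:ℤ)^r = -1 := by
      rw [← pow_add, (show k-r+r = k by omega)]
      exact Odd.neg_one_pow hk
    have hch : (k.choose (k-r)) = k.choose r := Nat.choose_symm hrk
    have hc1 : ((k-r:ℕ):ℤ) = (k:ℤ)-(r:ℤ) := by omega
    have h2 : ch (((a+a:ℕ):ℤ)-(k:ℤ)) ((a:ℤ)-((k-r:ℕ):ℤ))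
        = ch (((a+a:ℕ):ℤ)-(k:ℤ)) ((a:ℤ)-(r:ℤ)) := by
      rw [hc1, ch_symm]
      congr 1
      push_cast
      ring
    have h3 : ch (((b+b:ℕ):ℤ)-(k:ℤ)) ((b:ℤ)-(k:ℤ)+((k-r:ℕ):ℤ))
        = ch (((b+b:ℕ):ℤ)-(k:ℤ)) ((b:ℤ)-(k:ℤ)+(r:ℤ)) := by
      rw [hc1, (show (b:ℤ)-(k:ℤ)+((k:ℤ)-(r:ℤ)) = (b:ℤ)-(r:ℤ) by ring), ch_symm]
      congr 1
      push_cast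
      ring
    rw [hch, h2, h3]
    have hexp : (-1:ℤ)^(k-r) = -(-1:ℤ)^r := by
      have hsq : (-1:ℤ)^r * (-1:ℤ)^r = 1 := by
        rw [← pow_add]
        exact Even.neg_one_pow ⟨r, rfl⟩
      linear_combination ((-1:ℤ)^r) * hsgn - ((-1:ℤ)^(k-r)) * hsq
    rw [hexp]
    ring
  rw [Finset.sum_congr rfl key] at hrefl
  rw [Finset.sum_neg_distrib] at hrefl
  linarith [hrefl]

/-- Trinomial coefficient `(a+b+c)! / (a! b! c!)`. -/
def mult (a b c : ℕ) : ℕ := (a+b+c).factorial / (a.factorial * b.factorial * c.factorial)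

theorem stmt_9 (m n k : ℕ) (hm : Even m) (hn : Even n) (hk : Odd k)
    (hkm : k ≤ m) (hkn : k ≤ n) :
    cg m n k (m/2) (n/2) = 0 := by
  obtain ⟨a, rfl⟩ := hm
  obtain ⟨b, rfl⟩ := hn
  have ha : (a+a)/2 = a := by omega
  have hb : (b+b)/2 = b := by omega
  rw [ha, hb]
  have hp : k + (a+a-k) = a+a := by omega
  have hq : k + (b+b-k) = b+b := by omega
  have hI := main_I (a+a-k) (b+b-k) k a b (by omega) (by omega)
  rw [hp, hq] at hI
  rw [Fs_center_zero a b k hk, mul_zero] at hI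
  have hne : ((k.factorial * (a+a-k).factorial * (b+b-k).factorial : ℕ) : ℤ) ≠ 0 := by
    have : 0 < k.factorial * (a+a-k).factorial * (b+b-k).factorial := by positivity
    exact_mod_cast Nat.pos_iff_ne_zero.mp this
  rcases mul_eq_zero.mp hI with h | h
  · exact absurd h hne
  · exact h
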